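/- arXiv:2405.08631 — 6 statements merged into one kernel-verified Lean document; each statement's English description precedes it below -/
import Mathlib

section
/- Let f : ℝ → ℝ be convex, continuously differentiable with f'(x) < 0 for all x (non-vanishing derivative, decreasing), and suppose f has a root r with f(r) = 0. If x₀ satisfies f(x₀) ≥ 0, then the Newton iterates x_{k+1} = x_k - f(x_k)/f'(x_k) form a monotonically increasing sequence that converges to a root of f. -/
/-!
The iterates are the orbit of the Newton map `N x = x - f x / f' x`. Convexity puts the
graph of `f` above its tangent at `x`, and that tangent vanishes at `N x`, so `f ≥ 0` is
preserved along the orbit; since `f' < 0`, this makes every step move to the right, while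
`f ≥ 0` also keeps the iterates below the root `r` of the decreasing function `f`. The
bounded increasing sequence converges, and its limit is a fixed point of the continuous
map `N`, i.e. a root of `f`.
-/

open Filter Topology

lemma ConvexOn.add_deriv_mul_sub_le {S : Set ℝ} {f : ℝ → ℝ} {x y : ℝ}
    (hfc : ConvexOn ℝ S f) (hx : x ∈ S) (hy : y ∈ S) (hfd : DifferentiableAt ℝ f x) :
    f x + deriv f x * (y - x) ≤ f y := by
  rcases lt_trichotomy x y with hxy | rfl | hyx
  · have h := hfc.deriv_le_slope hx hy hxy hfd
    rw [slope_def_field, le_div_iff₀ (sub_pos.mpr hxy)] at h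
    linarith
  · simp
  · have h := hfc.slope_le_deriv hy hx hyx hfd
    rw [slope_def_field, div_le_iff₀ (sub_pos.mpr hyx)] at h
    linarith

noncomputable def newtonMap (f : ℝ → ℝ) (x : ℝ) : ℝ :=
  x - f x / deriv f x

namespace newtonMap

variable {f : ℝ → ℝ} {x : ℝ}

lemma deriv_mul_sub_self (hx : deriv f x ≠ 0) : deriv f x * (newtonMap f x - x) = -f x := by
  rw [newtonMap]
  field_simp
  ring

lemma nonneg_apply_of_convexOn {S : Set ℝ} (hfc : ConvexOn ℝ S f) (hx : x ∈ S)
    (hN : newtonMap f x ∈ S) (hfd : DifferentiableAt ℝ f x) (hf' : deriv f x ≠ 0) :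
    0 ≤ f (newtonMap f x) := by
  have h := hfc.add_deriv_mul_sub_le hx hN hfd
  rw [deriv_mul_sub_self hf'] at h
  linarith

lemma self_le (hf : 0 ≤ f x) (hf' : deriv f x < 0) : x ≤ newtonMap f x :=
  le_sub_self_iff _ |>.mpr (div_nonpos_of_nonneg_of_nonpos hf hf'.le)

lemma isFixedPt_iff (hf' : deriv f x ≠ 0) : Function.IsFixedPt (newtonMap f) x ↔ f x = 0 := by
  simp [Function.IsFixedPt, newtonMap, hf']

lemma continuous (hf : Continuous f) (hf' : Continuous (deriv f)) (hne : ∀ y, deriv f y ≠ 0) :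
    Continuous (newtonMap f) :=
  continuous_id.sub (hf.div hf' hne)

end newtonMap

/-- Newton's method convergence for a convex, continuously differentiable,
decreasing function with a root: iterates starting at a point with `f x₀ ≥ 0`
are monotone increasing and converge to a root of `f`. -/
theorem newton_converges
    (f : ℝ → ℝ)
    (hconv : ConvexOn ℝ Set.univ f)
    (hdiff : Differentiable ℝ f)
    (hcont : Continuous (deriv f))
    (hderiv : ∀ x : ℝ, deriv f x < 0)
    (r : ℝ) (hr : f r = 0)
    (x : ℕ → ℝ)
    (hx0 : 0 ≤ f (x 0))
    (hiter : ∀ k : ℕ, x (k + 1) = x k - f (x k) / deriv f (x k)) :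
    Monotone x ∧ ∃ L : ℝ, Filter.Tendsto x Filter.atTop (nhds L) ∧ f L = 0 := by
  have hstep : ∀ k, x (k + 1) = newtonMap f (x k) := hiter
  have hne : ∀ y, deriv f y ≠ 0 := fun y => (hderiv y).ne
  have hnonneg : ∀ k, 0 ≤ f (x k) := by
    intro k
    induction k with
    | zero => exact hx0
    | succ k _ =>
      rw [hstep]
      exact newtonMap.nonneg_apply_of_convexOn hconv (Set.mem_univ _) (Set.mem_univ _)
        (hdiff _) (hne _)
  have hmono : Monotone x :=
    monotone_nat_of_le_succ fun k => hstep k ▸ newtonMap.self_le (hnonneg k) (hderiv _)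
  have hle_root : ∀ k, x k ≤ r :=
    fun k => (strictAnti_of_deriv_neg hderiv).le_iff_ge.mp (hr ▸ hnonneg k)
  obtain ⟨L, hlim⟩ : ∃ L, Tendsto x atTop (𝓝 L) :=
    ⟨_, tendsto_atTop_ciSup hmono ⟨r, Set.forall_mem_range.mpr hle_root⟩⟩
  have horbit : x = fun k => (newtonMap f)^[k] (x 0) := by
    funext k
    induction k with
    | zero => rfl
    | succ k ih => rw [hstep, ih, Function.iterate_succ_apply']
  refine ⟨hmono, L, hlim, (newtonMap.isFixedPt_iff (hne _)).mp ?_⟩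
  rw [horbit] at hlim
  exact isFixedPt_of_tendsto_iterate hlim
    (newtonMap.continuous hdiff.continuous hcont hne).continuousAt
end

section
/- Consider the minimization over x ∈ ℝ^d of (1/2) xᵀΣx - vᵀx + λ‖x‖₂, where Σ is a diagonal matrix with nonnegative diagonal entries and λ > 0. If v_i = 0 for every index i with Σ_{ii} = 0, then a finite minimizer exists. -/
/-! Completing the square in each coordinate bounds the quadratic part from below by a
constant, so the objective grows at least like `λ‖x‖ - C`; a continuous coercive function on
a finite-dimensional space attains its minimum. -/

open Finset Filter

-- For `s = 0` the bound is `-(0 / 0) = 0`, by Lean's convention `x / 0 = 0`.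
theorem neg_sq_div_le_half_mul_sq_sub_mul {s b : ℝ} (hs : 0 ≤ s) (hb : s = 0 → b = 0) (t : ℝ) :
    -(b ^ 2 / (2 * s)) ≤ 1 / 2 * (s * t ^ 2) - b * t := by
  rcases hs.eq_or_lt with rfl | hs
  · simp [hb rfl]
  · have hsq : 0 ≤ (s * t - b) ^ 2 / (2 * s) := by positivity
    have hexpand : (s * t - b) ^ 2 / (2 * s) = 1 / 2 * (s * t ^ 2) - b * t + b ^ 2 / (2 * s) := by
      field_simp
      ring
    linarith

theorem neg_sum_sq_div_le_quadratic {ι : Type*} [Fintype ι] {S b : ι → ℝ} (hS : ∀ i, 0 ≤ S i)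
    (hker : ∀ i, S i = 0 → b i = 0) (x : ι → ℝ) :
    -∑ i, b i ^ 2 / (2 * S i) ≤ 1 / 2 * (∑ i, S i * x i ^ 2) - ∑ i, b i * x i := by
  rw [mul_sum, ← sum_sub_distrib, ← sum_neg_distrib]
  exact sum_le_sum fun i _ => neg_sq_div_le_half_mul_sq_sub_mul (hS i) (hker i) (x i)

theorem exists_forall_le_of_mul_norm_sub_le {E : Type*} [NormedAddCommGroup E] [ProperSpace E]
    {f : E → ℝ} (hf : Continuous f) {lam C : ℝ} (hlam : 0 < lam)
    (hbound : ∀ x, lam * ‖x‖ - C ≤ f x) : ∃ xstar, ∀ x, f xstar ≤ f x := by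
  have hcoercive : Tendsto f (cocompact E) atTop :=
    tendsto_atTop_mono hbound <| tendsto_atTop_add_const_right _ (-C)
      (tendsto_norm_cocompact_atTop.const_mul_atTop hlam)
  exact hf.exists_forall_le hcoercive

/-- Existence of a finite minimizer of `x ↦ (1/2) xᵀΣx - vᵀx + λ‖x‖₂` when `Σ`
is diagonal nonnegative, `λ > 0`, and `v` vanishes on the kernel of `Σ`. -/
theorem bcd_minimizer_exists
    (d : ℕ) (S : Fin d → ℝ) (hS : ∀ i, 0 ≤ S i)
    (v : EuclideanSpace ℝ (Fin d)) (lam : ℝ) (hlam : 0 < lam)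
    (hker : ∀ i, S i = 0 → v i = 0) :
    ∃ xstar : EuclideanSpace ℝ (Fin d), ∀ x : EuclideanSpace ℝ (Fin d),
      (1 / 2) * (∑ i, S i * (xstar i) ^ 2) - (∑ i, v i * xstar i) + lam * ‖xstar‖
        ≤ (1 / 2) * (∑ i, S i * (x i) ^ 2) - (∑ i, v i * x i) + lam * ‖x‖ := by
  refine exists_forall_le_of_mul_norm_sub_le (by fun_prop) hlam
    (C := ∑ i, v i ^ 2 / (2 * S i)) fun x => ?_
  have := neg_sum_sq_div_le_quadratic hS hker x
  linarith
end

section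
/- Consider minimizing f(x) = (1/2) xᵀΣx - vᵀx + λ‖x‖₂ with Σ diagonal positive semidefinite, λ > 0, v vanishing on the kernel of Σ, and ‖v‖₂ > λ. Then any minimizer x⋆ is nonzero and satisfies x⋆ = (Σ + (λ/‖x⋆‖₂) I)⁻¹ v. -/
/-!
The origin is not a minimizer: along the ray `t • v` the objective equals
`t * (A / 2 * t - ‖v‖ * (‖v‖ - λ))` with `A = ∑ Σᵢᵢ vᵢ²`, which is negative for small `t > 0`.
Away from the origin the objective is differentiable, so at a minimizer its derivative along
each coordinate direction vanishes: `Σᵢᵢ x⋆ᵢ - vᵢ + λ x⋆ᵢ / ‖x⋆‖ = 0`, i.e. the fixed-point equation.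
-/

open Finset

theorem hasDerivAt_norm_add_smul {E : Type*} [NormedAddCommGroup E] [InnerProductSpace ℝ E]
    {x : E} (hx : x ≠ 0) (y : E) :
    HasDerivAt (fun s : ℝ => ‖x + s • y‖) (inner ℝ x y / ‖x‖) 0 := by
  have hline : HasDerivAt (fun s : ℝ => x + s • y) y 0 := by
    simpa using ((hasDerivAt_id (0 : ℝ)).smul_const y).const_add x
  have hsq := hline.norm_sq.sqrt (by simpa using hx)
  simp only [zero_smul, add_zero, Real.sqrt_sq (norm_nonneg _)] at hsq
  convert hsq using 1
  field_simp

section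

variable {ι : Type*} [Fintype ι]

noncomputable def blockObjective (S : ι → ℝ) (v : EuclideanSpace ℝ ι) (lam : ℝ)
    (x : EuclideanSpace ℝ ι) : ℝ :=
  (1 / 2) * (∑ i, S i * x i ^ 2) - (∑ i, v i * x i) + lam * ‖x‖

theorem hasDerivAt_blockObjective_add_smul (S : ι → ℝ) (v : EuclideanSpace ℝ ι) (lam : ℝ)
    {x : EuclideanSpace ℝ ι} (hx : x ≠ 0) (y : EuclideanSpace ℝ ι) :
    HasDerivAt (fun s : ℝ => blockObjective S v lam (x + s • y))
      (∑ i, S i * x i * y i - ∑ i, v i * y i + lam * (inner ℝ x y / ‖x‖)) 0 := by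
  have hcoord : ∀ i, HasDerivAt (fun s : ℝ => x i + s * y i) (y i) 0 := fun i => by
    simpa using ((hasDerivAt_id (0 : ℝ)).mul_const (y i)).const_add (x i)
  have hquad : HasDerivAt (fun s : ℝ => ∑ i, S i * (x i + s * y i) ^ 2)
      (∑ i, S i * (2 * x i * y i)) 0 :=
    HasDerivAt.fun_sum fun i _ => by simpa using ((hcoord i).pow 2).const_mul (S i)
  have hlin : HasDerivAt (fun s : ℝ => ∑ i, v i * (x i + s * y i)) (∑ i, v i * y i) 0 :=
    HasDerivAt.fun_sum fun i _ => (hcoord i).const_mul (v i)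
  have hsplit : (fun s : ℝ => blockObjective S v lam (x + s • y)) = fun s =>
      1 / 2 * (∑ i, S i * (x i + s * y i) ^ 2) - ∑ i, v i * (x i + s * y i)
        + lam * ‖x + s • y‖ := by
    ext s; simp [blockObjective]
  rw [hsplit]
  refine (((hquad.const_mul (1 / 2)).sub hlin).add
    ((hasDerivAt_norm_add_smul hx y).const_mul lam)).congr_deriv ?_
  rw [mul_sum]; congr 2; exact sum_congr rfl fun i _ => by ring

theorem IsLocalMin.blockObjective_deriv_eq_zero {S : ι → ℝ} {v : EuclideanSpace ℝ ι} {lam : ℝ}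
    {x : EuclideanSpace ℝ ι} (hmin : IsLocalMin (blockObjective S v lam) x) (hx : x ≠ 0)
    (y : EuclideanSpace ℝ ι) :
    ∑ i, S i * x i * y i - ∑ i, v i * y i + lam * (inner ℝ x y / ‖x‖) = 0 := by
  have hline : IsLocalMin (fun s : ℝ => blockObjective S v lam (x + s • y)) 0 := by
    have hcont : ContinuousAt (fun s : ℝ => x + s • y) 0 := by fun_prop
    exact IsLocalMin.comp_continuous (by simpa using hmin) hcont
  exact hline.hasDerivAt_eq_zero (hasDerivAt_blockObjective_add_smul S v lam hx y)

theorem IsLocalMin.blockObjective_apply_eq {S : ι → ℝ} {v : EuclideanSpace ℝ ι} {lam : ℝ}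
    {x : EuclideanSpace ℝ ι} (hmin : IsLocalMin (blockObjective S v lam) x) (hx : x ≠ 0)
    (i : ι) (hden : S i + lam / ‖x‖ ≠ 0) :
    x i = v i / (S i + lam / ‖x‖) := by
  classical
  have hi := hmin.blockObjective_deriv_eq_zero hx (EuclideanSpace.single i 1)
  simp only [PiLp.single_apply, mul_ite, mul_one, mul_zero, sum_ite_eq', mem_univ, if_true,
    EuclideanSpace.inner_single_right, conj_trivial, one_mul] at hi
  rw [eq_div_iff hden]
  linear_combination hi

theorem exists_blockObjective_smul_neg (S : ι → ℝ) {v : EuclideanSpace ℝ ι} {lam : ℝ}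
    (hlam : 0 ≤ lam) (hv : lam < ‖v‖) : ∃ t : ℝ, blockObjective S v lam (t • v) < 0 := by
  set A := ∑ i, S i * v i ^ 2
  have hgain : 0 < ‖v‖ * (‖v‖ - lam) := mul_pos (by linarith) (by linarith)
  obtain ⟨t, ht, htA⟩ := exists_pos_mul_lt hgain (A / 2)
  refine ⟨t, ?_⟩
  have hval : blockObjective S v lam (t • v) = t * (A / 2 * t - ‖v‖ * (‖v‖ - lam)) := by
    have hvv : ∑ i, v i * v i = ‖v‖ ^ 2 := by
      rw [← real_inner_self_eq_norm_sq, PiLp.inner_apply]; simp [sq]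
    have hquad : ∑ i, S i * (t * v i) ^ 2 = t ^ 2 * A := by
      rw [mul_sum]; exact sum_congr rfl fun i _ => by ring
    have hlin : ∑ i, v i * (t * v i) = t * ‖v‖ ^ 2 := by
      rw [← hvv, mul_sum]; exact sum_congr rfl fun i _ => by ring
    simp only [blockObjective, PiLp.smul_apply, smul_eq_mul, norm_smul, Real.norm_of_nonneg ht.le,
      hquad, hlin]
    ring
  rw [hval]
  exact mul_neg_of_pos_of_neg ht (by linarith)

theorem ne_zero_of_forall_blockObjective_le {S : ι → ℝ} {v : EuclideanSpace ℝ ι} {lam : ℝ}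
    (hlam : 0 ≤ lam) (hv : lam < ‖v‖) {x : EuclideanSpace ℝ ι}
    (hmin : ∀ z, blockObjective S v lam x ≤ blockObjective S v lam z) : x ≠ 0 := by
  rintro rfl
  obtain ⟨t, ht⟩ := exists_blockObjective_smul_neg S hlam hv
  have hzero : blockObjective S v lam 0 = 0 := by simp [blockObjective]
  linarith [hmin (t • v)]

end

open Finset in
theorem bcd_minimizer_fixed_point_general
    (d : ℕ) (S : Fin d → ℝ) (hS : ∀ i, 0 ≤ S i)
    (v : EuclideanSpace ℝ (Fin d)) (lam : ℝ) (hlam : 0 < lam)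
    (hv : lam < ‖v‖)
    (xstar : EuclideanSpace ℝ (Fin d))
    (hmin : ∀ x : EuclideanSpace ℝ (Fin d),
      (1 / 2) * (∑ i, S i * (xstar i) ^ 2) - (∑ i, v i * xstar i) + lam * ‖xstar‖
        ≤ (1 / 2) * (∑ i, S i * (x i) ^ 2) - (∑ i, v i * x i) + lam * ‖x‖) :
    xstar ≠ 0 ∧ ∀ i, xstar i = v i / (S i + lam / ‖xstar‖) := by
  have hx : xstar ≠ 0 := ne_zero_of_forall_blockObjective_le hlam.le hv hmin
  have hloc : IsLocalMin (blockObjective S v lam) xstar := Filter.Eventually.of_forall hmin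
  refine ⟨hx, fun i => hloc.blockObjective_apply_eq hx i ?_⟩
  exact (add_pos_of_nonneg_of_pos (hS i) (div_pos hlam (norm_pos_iff.2 hx))).ne'

open Finset in
/-- When `‖v‖₂ > λ`, any minimizer of the block-coordinate objective is nonzero
and satisfies the fixed-point equation `x⋆ = (Σ + (λ/‖x⋆‖) I)⁻¹ v`. -/
theorem bcd_minimizer_fixed_point
    (d : ℕ) (S : Fin d → ℝ) (hS : ∀ i, 0 ≤ S i)
    (v : EuclideanSpace ℝ (Fin d)) (lam : ℝ) (hlam : 0 < lam)
    (hker : ∀ i, S i = 0 → v i = 0)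
    (hv : lam < ‖v‖)
    (xstar : EuclideanSpace ℝ (Fin d))
    (hmin : ∀ x : EuclideanSpace ℝ (Fin d),
      (1 / 2) * (∑ i, S i * (xstar i) ^ 2) - (∑ i, v i * xstar i) + lam * ‖xstar‖
        ≤ (1 / 2) * (∑ i, S i * (x i) ^ 2) - (∑ i, v i * x i) + lam * ‖x‖) :
    xstar ≠ 0 ∧ ∀ i, xstar i = v i / (S i + lam / ‖xstar‖) :=
  bcd_minimizer_fixed_point_general d S hS v lam hlam hv xstar hmin
end

section
/- If x⋆ ≠ 0 minimizes f(x) = (1/2) xᵀΣx - vᵀx + λ‖x‖₂ with Σ diagonal positive semidefinite and λ > 0, then h := ‖x⋆‖₂ satisfies Σ_{i=1}^d v_i² / (Σ_{ii} h + λ)² = 1. -/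
/-!
Away from the origin the objective is differentiable, so its gradient vanishes at `x⋆`:
`Σ x⋆ - v + (λ / h) x⋆ = 0` with `h = ‖x⋆‖`, i.e. `x⋆ᵢ (Σᵢᵢ h + λ) = vᵢ h` for every `i`.
As `Σᵢᵢ h + λ > 0`, this gives `vᵢ² / (Σᵢᵢ h + λ)² = x⋆ᵢ² / h²`, and these sum to `1`.
-/

open Finset
open scoped RealInnerProductSpace

section NormDeriv

variable {E : Type*} [NormedAddCommGroup E] [InnerProductSpace ℝ E]

theorem hasFDerivAt_norm_of_ne_zero {x : E} (hx : x ≠ 0) :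
    HasFDerivAt (fun y : E => ‖y‖) (‖x‖⁻¹ • innerSL ℝ x) x := by
  have hpos : 0 < ‖x‖ := norm_pos_iff.mpr hx
  have h := (hasStrictFDerivAt_norm_sq x).hasFDerivAt.sqrt (by positivity)
  simp only [Real.sqrt_sq (norm_nonneg _)] at h
  convert h using 1
  ext u
  simp only [smul_apply, coe_innerSL_apply, smul_eq_mul, one_div, mul_inv_rev, nsmul_eq_mul,
    Nat.cast_ofNat]
  field_simp

theorem IsLocalMin.hasFDerivAt_add_mul_norm_eq_zero {g : E → ℝ} {g' : E →L[ℝ] ℝ} {x : E}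
    {lam : ℝ} (hmin : IsLocalMin (fun y => g y + lam * ‖y‖) x) (hg : HasFDerivAt g g' x)
    (hx : x ≠ 0) : g' + (lam / ‖x‖) • innerSL ℝ x = 0 := by
  have h := hmin.hasFDerivAt_eq_zero (hg.add ((hasFDerivAt_norm_of_ne_zero hx).const_mul lam))
  rwa [smul_smul, ← div_eq_mul_inv] at h

end NormDeriv

theorem EuclideanSpace.hasFDerivAt_sum_apply {ι : Type*} [Fintype ι] {f : ι → ℝ → ℝ}
    {f' : ι → ℝ} {x : EuclideanSpace ℝ ι} (hf : ∀ i, HasDerivAt (f i) (f' i) (x i)) :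
    HasFDerivAt (fun y : EuclideanSpace ℝ ι => ∑ i, f i (y i))
      (∑ i, f' i • EuclideanSpace.proj (𝕜 := ℝ) (ι := ι) i) x :=
  HasFDerivAt.fun_sum fun i _ =>
    (hf i).comp_hasFDerivAt x (EuclideanSpace.proj (𝕜 := ℝ) (ι := ι) i).hasFDerivAt

theorem mul_add_eq_mul_norm_of_isLocalMin {ι : Type*} [Fintype ι] {S : ι → ℝ}
    {v x : EuclideanSpace ℝ ι} {lam : ℝ}
    (hmin : IsLocalMin (fun y : EuclideanSpace ℝ ι =>
      (1 / 2) * (∑ i, S i * (y i) ^ 2) - (∑ i, v i * y i) + lam * ‖y‖) x)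
    (hx : x ≠ 0) (i : ι) :
    x i * (S i * ‖x‖ + lam) = v i * ‖x‖ := by
  classical
  have hquad := EuclideanSpace.hasFDerivAt_sum_apply (x := x)
    fun j => (hasDerivAt_pow 2 (x j)).const_mul (S j)
  have hlin := EuclideanSpace.hasFDerivAt_sum_apply (x := x)
    fun j => (hasDerivAt_id (x j)).const_mul (v j)
  have h := congrArg (· (EuclideanSpace.single i 1))
    (hmin.hasFDerivAt_add_mul_norm_eq_zero ((hquad.const_mul (1 / 2)).sub hlin) hx)
  simp only [one_div, Nat.cast_ofNat, Nat.add_one_sub_one, pow_one, mul_one, add_apply, sub_apply,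
    smul_apply, _root_.sum_apply, PiLp.proj_apply, PiLp.single_apply, smul_eq_mul, mul_ite, mul_zero,
    sum_ite_eq', mem_univ, ↓reduceIte, coe_innerSL_apply, EuclideanSpace.inner_single_right,
    Real.ringHom_apply, one_mul, zero_apply] at h
  have hpos : 0 < ‖x‖ := norm_pos_iff.mpr hx
  field_simp at h
  linear_combination h

/-- A nonzero minimizer `x⋆` of the block-coordinate objective has norm `h`
satisfying the norm equation `∑ vᵢ²/(Σᵢᵢ h + λ)² = 1`. -/
theorem bcd_norm_equation
    (d : ℕ) (S : Fin d → ℝ) (hS : ∀ i, 0 ≤ S i)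
    (v : EuclideanSpace ℝ (Fin d)) (lam : ℝ) (hlam : 0 < lam)
    (xstar : EuclideanSpace ℝ (Fin d)) (hne : xstar ≠ 0)
    (hmin : ∀ x : EuclideanSpace ℝ (Fin d),
      (1 / 2) * (∑ i, S i * (xstar i) ^ 2) - (∑ i, v i * xstar i) + lam * ‖xstar‖
        ≤ (1 / 2) * (∑ i, S i * (x i) ^ 2) - (∑ i, v i * x i) + lam * ‖x‖) :
    ∑ i, (v i) ^ 2 / (S i * ‖xstar‖ + lam) ^ 2 = 1 := by
  have hpos : 0 < ‖xstar‖ := norm_pos_iff.mpr hne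
  have hstat := mul_add_eq_mul_norm_of_isLocalMin (Filter.Eventually.of_forall hmin) hne
  calc ∑ i, (v i) ^ 2 / (S i * ‖xstar‖ + lam) ^ 2
      = ∑ i, (xstar i) ^ 2 / ‖xstar‖ ^ 2 := sum_congr rfl fun i _ => by
        have hden : 0 < S i * ‖xstar‖ + lam := by nlinarith [hS i]
        rw [div_eq_div_iff (by positivity) (by positivity)]
        linear_combination -(v i * ‖xstar‖ + xstar i * (S i * ‖xstar‖ + lam)) * hstat i
    _ = 1 := by
      rw [← sum_div, ← EuclideanSpace.real_norm_sq_eq, div_self (by positivity)]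
end

section
/- For the multinomial log-partition A(η) = log(Σ_{j=1}^c exp(η_j)) on ℝ^c, twice the diagonal of its Hessian dominates the Hessian: ∇²A(η) ⪯ 2 diag(∇²A(η)), i.e., for all u ∈ ℝ^c, uᵀ∇²A(η)u ≤ 2 Σ_j (∇²A(η))_{jj} u_j². Here ∇²A(η) = diag(π) - ππᵀ with π_j = exp(η_j)/Σ_k exp(η_k). -/
/-!
Expanding `∑ⱼ ∑ₖ pⱼ pₖ (uⱼ + uₖ)² = 2 (∑ p) (∑ p u²) + 2 (∑ p u)²` and bounding this
nonnegative double sum from below by its diagonal `4 ∑ pⱼ² uⱼ²` gives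
`2 ∑ pⱼ² uⱼ² ≤ ∑ p u² + (∑ p u)²` for any sub-probability vector `p`, which is the claim
rearranged. Softmax probabilities form such a vector.
-/

open Finset

section

variable {ι : Type*} [Fintype ι]

theorem sum_sum_mul_mul_add_sq {R : Type*} [CommRing R] (p u : ι → R) :
    ∑ j, ∑ k, p j * p k * (u j + u k) ^ 2
      = 2 * (∑ j, p j) * ∑ j, p j * u j ^ 2 + 2 * (∑ j, p j * u j) ^ 2 := by
  have hinner : ∀ j, ∑ k, p j * p k * (u j + u k) ^ 2
      = p j * u j ^ 2 * ∑ k, p k + p j * ∑ k, p k * u k ^ 2 + 2 * (p j * u j) * ∑ k, p k * u k :=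
    fun j => by
      simp only [mul_sum, ← sum_add_distrib]
      exact sum_congr rfl fun k _ => by ring
  simp only [hinner, sum_add_distrib, ← sum_mul, ← mul_sum]
  ring

theorem four_mul_sum_sq_mul_sq_le_sum_sum {p : ι → ℝ} (hp : ∀ j, 0 ≤ p j) (u : ι → ℝ) :
    4 * ∑ j, p j ^ 2 * u j ^ 2 ≤ ∑ j, ∑ k, p j * p k * (u j + u k) ^ 2 := by
  rw [mul_sum]
  refine sum_le_sum fun j _ => ?_
  calc 4 * (p j ^ 2 * u j ^ 2) = p j * p j * (u j + u j) ^ 2 := by ring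
    _ ≤ ∑ k, p j * p k * (u j + u k) ^ 2 :=
      single_le_sum (f := fun k => p j * p k * (u j + u k) ^ 2)
        (fun k _ => mul_nonneg (mul_nonneg (hp j) (hp k)) (sq_nonneg _)) (mem_univ j)

theorem sum_mul_sq_sub_sq_sum_mul_le {p : ι → ℝ} (hp : ∀ j, 0 ≤ p j) (hsum : ∑ j, p j ≤ 1)
    (u : ι → ℝ) :
    (∑ j, p j * u j ^ 2) - (∑ j, p j * u j) ^ 2 ≤ 2 * ∑ j, p j * (1 - p j) * u j ^ 2 := by
  have hdiag := four_mul_sum_sq_mul_sq_le_sum_sum hp u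
  rw [sum_sum_mul_mul_add_sq] at hdiag
  have hsecond : ∑ j, p j * (1 - p j) * u j ^ 2 = ∑ j, p j * u j ^ 2 - ∑ j, p j ^ 2 * u j ^ 2 := by
    rw [← sum_sub_distrib]
    exact sum_congr rfl fun j _ => by ring
  have hmass : (∑ j, p j) * ∑ j, p j * u j ^ 2 ≤ ∑ j, p j * u j ^ 2 :=
    mul_le_of_le_one_left (sum_nonneg fun j _ => mul_nonneg (hp j) (sq_nonneg _)) hsum
  rw [hsecond]
  linarith

end

open Finset in
theorem multinomial_hessian_diag_majorize_general
    (c : ℕ) (eta : Fin c → ℝ) (pi : Fin c → ℝ)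
    (hpi : ∀ j, pi j = Real.exp (eta j) / ∑ k, Real.exp (eta k)) :
    ∀ u : Fin c → ℝ,
      (∑ j, pi j * (u j) ^ 2) - (∑ j, pi j * u j) ^ 2
        ≤ 2 * ∑ j, pi j * (1 - pi j) * (u j) ^ 2 := by
  have hnonneg : ∀ j, 0 ≤ pi j := fun j => by rw [hpi j]; positivity
  have hsum : ∑ j, pi j ≤ 1 := by
    simp only [hpi, ← sum_div]
    exact div_self_le_one _
  exact sum_mul_sq_sub_sq_sum_mul_le hnonneg hsum

open Finset in
/-- Twice the diagonal of the multinomial Hessian `diag(π) - ππᵀ` dominates it: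
`uᵀ(diag(π) - ππᵀ)u ≤ 2 ∑ πⱼ(1-πⱼ)uⱼ²`. -/
theorem multinomial_hessian_diag_majorize
    (c : ℕ) (hc : 1 ≤ c) (eta : Fin c → ℝ) (pi : Fin c → ℝ)
    (hpi : ∀ j, pi j = Real.exp (eta j) / ∑ k, Real.exp (eta k)) :
    ∀ u : Fin c → ℝ,
      (∑ j, pi j * (u j) ^ 2) - (∑ j, pi j * u j) ^ 2
        ≤ 2 * ∑ j, pi j * (1 - pi j) * (u j) ^ 2 :=
  multinomial_hessian_diag_majorize_general c eta pi hpi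
end

section
/- Let Σ be diagonal with Σ_{ii} ≥ 0, λ > 0, and suppose v_i = 0 for all i with Σ_{ii} = 0 and ‖v‖₂ > λ. Let h > 0 be the unique root of φ(h) = Σ_i v_i²/(Σ_{ii}h+λ)² - 1. Then the vector x with components x_i = v_i/(Σ_{ii} + λ/h) satisfies ‖x‖₂ = h and is a stationary point of f(x) = (1/2)xᵀΣx - vᵀx + λ‖x‖₂ (it satisfies the subgradient optimality condition Σx - v + λ x/‖x‖₂ = 0). -/
/-!
Rewriting `xᵢ = h vᵢ / (Σᵢᵢ h + λ)`, the root condition `φ(h) = 0` says exactly that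
`‖x‖² = h² Σᵢ vᵢ² / (Σᵢᵢ h + λ)² = h²`. Once `‖x‖ = h`, the stationarity condition in
coordinate `i` reads `(Σᵢᵢ h + λ) xᵢ = h vᵢ`, which is the definition of `xᵢ`.
-/

open Finset

lemma div_add_div_eq_mul_div_mul_add {K : Type*} [Field K] {s l h : K} (v : K) (hh : h ≠ 0) :
    v / (s + l / h) = h * v / (s * h + l) := by
  rw [add_div_eq_mul_add_div _ _ hh, div_div_eq_mul_div, mul_comm]

lemma EuclideanSpace.norm_eq_of_sum_div_sq_eq_one {ι : Type*} [Fintype ι]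
    {x v : EuclideanSpace ℝ ι} {c : ι → ℝ} {h : ℝ} (hh : 0 ≤ h) (hx : ∀ i, x i = h * v i / c i)
    (hsum : ∑ i, v i ^ 2 / c i ^ 2 = 1) : ‖x‖ = h := by
  have hsq : ∑ i, ‖x i‖ ^ 2 = h ^ 2 :=
    calc ∑ i, ‖x i‖ ^ 2 = ∑ i, h ^ 2 * (v i ^ 2 / c i ^ 2) := by
          refine sum_congr rfl fun i _ => ?_
          rw [Real.norm_eq_abs, sq_abs, hx i, div_pow, mul_pow, mul_div_assoc]
      _ = h ^ 2 := by rw [← mul_sum, hsum, mul_one]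
  rw [EuclideanSpace.norm_eq, hsq, Real.sqrt_sq hh]

lemma mul_sub_add_mul_div_eq_zero {K : Type*} [Field K] {s v l h : K} (hh : h ≠ 0)
    (hc : s * h + l ≠ 0) : s * (h * v / (s * h + l)) - v + l * (h * v / (s * h + l) / h) = 0 := by
  field_simp
  ring

open Finset in
theorem bcd_solution_from_root_general
    (d : ℕ) (S : Fin d → ℝ) (hS : ∀ i, 0 ≤ S i)
    (v : EuclideanSpace ℝ (Fin d)) (lam : ℝ) (hlam : 0 < lam)
    (h : ℝ) (hh : 0 < h)
    (hroot : (∑ i, (v i) ^ 2 / (S i * h + lam) ^ 2) - 1 = 0)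
    (x : EuclideanSpace ℝ (Fin d))
    (hx : ∀ i, x i = v i / (S i + lam / h)) :
    ‖x‖ = h ∧ ∀ i, S i * x i - v i + lam * (x i / ‖x‖) = 0 := by
  have hx' : ∀ i, x i = h * v i / (S i * h + lam) := fun i =>
    (hx i).trans (div_add_div_eq_mul_div_mul_add _ hh.ne')
  have hnorm : ‖x‖ = h :=
    EuclideanSpace.norm_eq_of_sum_div_sq_eq_one hh.le hx' (sub_eq_zero.mp hroot)
  refine ⟨hnorm, fun i => ?_⟩
  rw [hnorm, hx' i]
  exact mul_sub_add_mul_div_eq_zero hh.ne' (by have := hS i; positivity)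

open Finset in
/-- If `h > 0` is a root of `φ`, then `x` with `xᵢ = vᵢ/(Σᵢᵢ + λ/h)` has norm `h`
and satisfies the stationarity condition `Σx - v + λ x/‖x‖ = 0`. -/
theorem bcd_solution_from_root
    (d : ℕ) (S : Fin d → ℝ) (hS : ∀ i, 0 ≤ S i)
    (v : EuclideanSpace ℝ (Fin d)) (lam : ℝ) (hlam : 0 < lam)
    (hker : ∀ i, S i = 0 → v i = 0)
    (hv : lam < ‖v‖)
    (h : ℝ) (hh : 0 < h)
    (hroot : (∑ i, (v i) ^ 2 / (S i * h + lam) ^ 2) - 1 = 0)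
    (x : EuclideanSpace ℝ (Fin d))
    (hx : ∀ i, x i = v i / (S i + lam / h)) :
    ‖x‖ = h ∧ ∀ i, S i * x i - v i + lam * (x i / ‖x‖) = 0 :=
  bcd_solution_from_root_general d S hS v lam hlam h hh hroot x hx
end
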